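/- arXiv:math/0610719 — 2 statements merged into one kernel-verified Lean document; each statement's English description precedes it below -/
import Mathlib

section
/- Let n be a positive integer, u a column of length n−k with u_1 ≤ n, and let ũ = [ũ_1,…,ũ_k] be the increasing complement of u in {1,…,n}. Set p(u,n) := [ũ_1−1, ũ_2−2, …, ũ_k−k]. Then the map v ↦ p(v,n) is a bijection between the set of columns v of length n−k+1 with v_1 ≤ n such that the two-column array (v,u) is a staircase, and the set of weakly increasing μ ∈ ℕ^{k−1} such that (p(u,n)+1^k)/μ is a ribbon (μ being padded with an initial 0 part). -/
open scoped BigOperators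

/-! ### Polynomial ring in two families of variables `x₁, x₂, …` and `y₁, y₂, …`.

`Rpoly` is the ring of polynomials with integer coefficients in the variables
`xP i` (the `x`-variables, indexed by `Sum.inl`) and `yP j` (the `y`-variables,
indexed by `Sum.inr`).  Throughout, variables are indexed starting from `1`. -/

abbrev Rpoly : Type := MvPolynomial (ℕ ⊕ ℕ) ℤ

noncomputable def xP (i : ℕ) : Rpoly := MvPolynomial.X (Sum.inl i)
noncomputable def yP (i : ℕ) : Rpoly := MvPolynomial.X (Sum.inr i)

/-! ### Divided differences on `Rpoly`.

`ddP i` is the Newton divided difference `∂ᵢ : f ↦ (f - fˢⁱ)/(xᵢ - xᵢ₊₁)`,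
implemented by its (exact) action on monomials:
`∂ᵢ (xᵢ^a xᵢ₊₁^b) = Σ_{j=b}^{a-1} xᵢ^j xᵢ₊₁^{a+b-1-j}` for `a ≥ b`,
and the antisymmetric counterpart when `a < b`. -/

noncomputable def ddMon (i : ℕ) (m : (ℕ ⊕ ℕ) →₀ ℕ) : Rpoly :=
  let a := m (Sum.inl i)
  let b := m (Sum.inl (i + 1))
  if b ≤ a then
    ∑ j ∈ Finset.Ico b a,
      MvPolynomial.monomial
        (Finsupp.update (Finsupp.update m (Sum.inl i) j) (Sum.inl (i + 1)) (a + b - 1 - j)) 1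
  else
    - ∑ j ∈ Finset.Ico a b,
      MvPolynomial.monomial
        (Finsupp.update (Finsupp.update m (Sum.inl i) j) (Sum.inl (i + 1)) (a + b - 1 - j)) 1

noncomputable def ddP (i : ℕ) (f : Rpoly) : Rpoly :=
  ∑ m ∈ f.support, MvPolynomial.coeff m f • ddMon i m

/-- `∂_σ` along a word `[i₁, …, i_N]` is `∂_{i₁} ∘ ⋯ ∘ ∂_{i_N}`. -/
noncomputable def ddWord (w : List ℕ) (f : Rpoly) : Rpoly := w.foldr ddP f

/-! ### Schubert polynomials, indexed by a permutation given as a list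
`[σ 1, …, σ n]` of the values of a permutation of `{1, …, n}`. -/

/-- The code of a permutation list: `c i = #{j > i : σ_j < σ_i}` (positions 0-based). -/
def codeOf (l : List ℕ) (i : ℕ) : ℕ :=
  ((l.drop (i + 1)).filter (fun a => a < l.getD i 0)).length

/-- The dominant Schubert polynomial `Y_v = Π_i Π_{j=1}^{v_i} (x_i - y_j)`
attached to an exponent list `v`. -/
noncomputable def YDomP (v : List ℕ) : Rpoly :=
  ∏ i ∈ Finset.range v.length, ∏ j ∈ Finset.range (v.getD i 0), (xP (i + 1) - yP (j + 1))

/-- The dominant polynomial attached to a (dominant) permutation list via its code. -/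
noncomputable def domP (l : List ℕ) : Rpoly :=
  YDomP ((List.range l.length).map (codeOf l))

/-- First ascent position (0-based) of a list. -/
def firstAscent (l : List ℕ) : Option ℕ :=
  (List.range (l.length - 1)).find? (fun i => l.getD i 0 < l.getD (i + 1) 0)

/-- First descent position (0-based) of a list. -/
def firstDescent (l : List ℕ) : Option ℕ :=
  (List.range (l.length - 1)).find? (fun i => l.getD (i + 1) 0 < l.getD i 0)

/-- Exchange the entries at positions `i`, `i+1` of a list. -/
def swapPos (l : List ℕ) (i : ℕ) : List ℕ :=
  (l.set i (l.getD (i + 1) 0)).set (i + 1) (l.getD i 0)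

/-- Schubert polynomials via the recursion `X_σ = ∂_i X_{σ sᵢ}` whenever
`σ_i < σ_{i+1}` (so that lengths add), starting from the dominant case; the
first argument is a fuel parameter. -/
noncomputable def SchubAux : ℕ → List ℕ → Rpoly
  | 0, l => domP l
  | fuel + 1, l =>
    match firstAscent l with
    | none => domP l
    | some i => ddP (i + 1) (SchubAux fuel (swapPos l i))

/-- The Schubert polynomial `X_σ(x, y)` of a permutation list `σ = [σ 1, …, σ n]`. -/
noncomputable def SchubP (l : List ℕ) : Rpoly := SchubAux (l.length * l.length) l

/-- A reduced word for the permutation given by a list, obtained by repeatedly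
exchanging the first descent: if `i` is a descent of `σ` then
`word σ = word (σ sᵢ) ++ [i]`. -/
def sortWord : ℕ → List ℕ → List ℕ
  | 0, _ => []
  | fuel + 1, l =>
    match firstDescent l with
    | none => []
    | some i => sortWord fuel (swapPos l i) ++ [i + 1]

/-- The standard reduced word `s₁ (s₂ s₁) (s₃ s₂ s₁) ⋯ (s_{r-1} ⋯ s₁)` of the
longest element `ω_r` of the symmetric group `S_r`. -/
def omegaWord (r : ℕ) : List ℕ :=
  (List.range (r - 1)).flatMap (fun k => (List.range (k + 1)).map (fun j => k + 1 - j))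

/-- For weakly increasing `ν ∈ ℕ^r`, the partition `λ = (ν_r + r - 1, …, ν_1)`. -/
def lamOf (ν : List ℕ) : List ℕ :=
  ν.reverse.mapIdx (fun i a => a + (ν.length - 1 - i))

/-- For a weakly increasing `ν ∈ ℕ^r`, the (Graßmannian) Schubert polynomial
`Y_ν := ∂_{ω_r} Y_λ` with `λ = (ν_r + r - 1, …, ν_1)`. -/
noncomputable def YGr (ν : List ℕ) : Rpoly := ddWord (omegaWord ν.length) (YDomP (lamOf ν))

/-- Evaluation of a polynomial of `Rpoly` at points `x i`, `y j` of a commutative ring. -/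
noncomputable def evalP {K : Type*} [CommRing K] (x y : ℕ → K) (f : Rpoly) : K :=
  MvPolynomial.aeval (Sum.elim x y) f

/-! ### Columns, staircases and their partition functions. -/

/-- A column: a strictly decreasing list of positive integers. -/
def IsCol (u : List ℕ) : Prop := u.Chain' (· > ·) ∧ ∀ a ∈ u, 0 < a

/-- Rows weakly increase: reading rows from the bottom (columns are bottom-aligned),
the left neighbour of the entry of `next` at 0-based position `p` (from the top)
is the entry of `prev` at position `p+1`. -/
def RowCond (prev next : List ℕ) : Prop :=
  ∀ p, p < next.length → prev.getD (p + 1) 0 ≤ next.getD p 0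

/-- Diagonals weakly decrease: the up-left neighbour of the entry of `next` at
0-based position `p` is the entry of `prev` at position `p`. -/
def DiagCond (prev next : List ℕ) : Prop :=
  ∀ p, p < next.length → next.getD p 0 ≤ prev.getD p 0

/-- A staircase: a nonempty sequence of columns of lengths `k, k-1, …, k-r`,
with weakly increasing rows and weakly decreasing diagonals. -/
def IsStaircase (t : List (List ℕ)) : Prop :=
  t ≠ [] ∧
  (∀ i, i < t.length → (t.getD i []).length + i = (t.getD 0 []).length) ∧
  (∀ c ∈ t, IsCol c) ∧
  (∀ i, i + 1 < t.length →
    RowCond (t.getD i []) (t.getD (i + 1) []) ∧ DiagCond (t.getD i []) (t.getD (i + 1) []))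

section Weights

variable {K : Type*} [Field K]

/-- The weight of an entry `b` whose left neighbour is `left` and whose up-left
neighbour is `upleft`, the column carrying the variable value `xv`:
`xv/y_b - 1` if `left = b`, `xv/y_b` if `left < b < upleft`, and `1` otherwise. -/
noncomputable def entryW (xv : K) (y : ℕ → K) (b left upleft : ℕ) : K :=
  if left = b then xv / y b - 1
  else if left < b ∧ b < upleft then xv / y b
  else 1

/-- The product of the weights of the entries of the column `next`, whose left
neighbour column is `prev` (one entry longer). -/
noncomputable def colW (xv : K) (y : ℕ → K) (prev next : List ℕ) : K :=
  ∏ p ∈ Finset.range next.length,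
    entryW xv y (next.getD p 0) (prev.getD (p + 1) 0) (prev.getD p 0)

/-- The weight of a staircase: the `m`-th column after the first carries the
variable `x m`. -/
noncomputable def stairW (x y : ℕ → K) (t : List (List ℕ)) : K :=
  ∏ m ∈ Finset.range (t.length - 1), colW (x (m + 1)) y (t.getD m []) (t.getD (m + 1) [])

/-- The partition function `F(u, v)`: the sum of the weights of all staircases
with first column `u` and last column `v`. -/
noncomputable def Fpart (u v : List ℕ) (x y : ℕ → K) : K :=
  ∑ᶠ t ∈ {t : List (List ℕ) | IsStaircase t ∧ t.headD [] = u ∧ t.getLastD [] = v},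
    stairW x y t

/-- `x^{ρ_r} = x₁^{r-1} x₂^{r-2} ⋯ x_r^0`. -/
noncomputable def xRho (r : ℕ) (x : ℕ → K) : K :=
  ∏ i ∈ Finset.range r, (x (i + 1)) ^ (r - 1 - i)

/-- `Π_i y_i^{α_i}` for an exponent list `α`. -/
noncomputable def yPowL (y : ℕ → K) (α : List ℕ) : K :=
  ∏ i ∈ Finset.range α.length, (y (i + 1)) ^ (α.getD i 0)

/-- `y^{⟨u⟩} = Π_m y_m^{⟨u⟩_m}` where `⟨u⟩_m` is the level of the value `m`. -/
noncomputable def yLev (u : List ℕ) (y : ℕ → K) : K :=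
  ∏ m ∈ Finset.range (u.foldr max 0), (y (m + 1)) ^ ((u.filter (fun a => m + 1 < a)).length)

end Weights

/-- The column `[n, n-1, …, 1]`. -/
def colN (n : ℕ) : List ℕ := (List.range n).reverse.map (· + 1)

/-- The list `[1, 2, …, n]`. -/
def oneTo (n : ℕ) : List ℕ := (List.range n).map (· + 1)

/-- The increasing complement of `u` in `{1, …, n}`. -/
def compl (n : ℕ) (u : List ℕ) : List ℕ := (oneTo n).filter (fun a => a ∉ u)

/-- The list `ρ_r = [r-1, r-2, …, 1, 0]`. -/
def rhoList (r : ℕ) : List ℕ := (List.range r).map (fun i => r - 1 - i)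

/-- `p(u, n) = [ũ₁ - 1, ũ₂ - 2, …, ũ_k - k]` where `ũ` is the increasing
complement of `u` in `{1, …, n}`. -/
def pSeq (n : ℕ) (u : List ℕ) : List ℕ := (compl n u).mapIdx (fun i a => a - (i + 1))

/-- Action of a permutation `w ∈ S_r` on the variables `x₁, …, x_r` of an assignment. -/
def permuteVars {α : Type*} {r : ℕ} (w : Equiv.Perm (Fin r)) (x : ℕ → α) : ℕ → α :=
  fun j => if h : 1 ≤ j ∧ j - 1 < r then x ((w ⟨j - 1, h.2⟩).val + 1) else x j

/-! ### Skew diagrams.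

The diagram of a weakly increasing `ζ ∈ ℕ^r` has rows `1, …, r` from top to
bottom (0-based `i` below), row `i` consisting of boxes in columns `1, …, ζ_i`;
the (shifted) content of the box in 0-based row `i` and 1-based column `j` is
`c(□) = i + j`. -/

/-- The box in 0-based row `i` and (1-based) column `j` belongs to `ζ/μ`. -/
def InSkew (ζ μ : List ℕ) (i j : ℕ) : Prop :=
  i < ζ.length ∧ μ.getD i 0 < j ∧ j ≤ ζ.getD i 0

/-- `μ ⊆ ζ` componentwise (same number of rows). -/
def IsSkew (ζ μ : List ℕ) : Prop :=
  μ.length = ζ.length ∧ ∀ i, i < ζ.length → μ.getD i 0 ≤ ζ.getD i 0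

/-- `ζ/μ` is a ribbon: it contains no `2 × 2` block of boxes. -/
def IsRibbon (ζ μ : List ℕ) : Prop :=
  IsSkew ζ μ ∧
    ¬ ∃ i j, InSkew ζ μ i j ∧ InSkew ζ μ i (j + 1) ∧
      InSkew ζ μ (i + 1) j ∧ InSkew ζ μ (i + 1) (j + 1)

/-- `ζ/μ` is a vertical strip: at most one box in each row. -/
def IsVStrip (ζ μ : List ℕ) : Prop :=
  IsSkew ζ μ ∧ ∀ i, i < ζ.length → ζ.getD i 0 ≤ μ.getD i 0 + 1

/-- `ζ/μ` is a horizontal strip: at most one box in each column. -/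
def IsHStrip (ζ μ : List ℕ) : Prop :=
  IsSkew ζ μ ∧ ∀ i j, InSkew ζ μ i j → ¬ InSkew ζ μ (i + 1) j

/-- `ψ^v(ζ/μ) = Π_{□ ∈ ζ/μ} y_{c(□)}`. -/
noncomputable def psiV (ζ μ : List ℕ) : Rpoly :=
  ∏ i ∈ Finset.range ζ.length, ∏ j ∈ Finset.Ioc (μ.getD i 0) (ζ.getD i 0), yP (i + j)

/-- `ψ^h(ζ/μ) = Π_{□ ∈ ζ/μ} (x - y_{c(□)})`. -/
noncomputable def psiH (ζ μ : List ℕ) (xv : Rpoly) : Rpoly :=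
  ∏ i ∈ Finset.range ζ.length, ∏ j ∈ Finset.Ioc (μ.getD i 0) (ζ.getD i 0), (xv - yP (i + j))

/-- The ribbon weight `θ(ζ/μ)`: a non-terminal box contributes `x - y_{c(□)}`;
a terminal box contributes `y_{c(□)}` if it lies directly above another box of
the ribbon, and `x` otherwise. -/
noncomputable def thetaW (ζ μ : List ℕ) (xv : Rpoly) : Rpoly :=
  ∏ i ∈ Finset.range ζ.length, ∏ j ∈ Finset.Ioc (μ.getD i 0) (ζ.getD i 0),
    if j < ζ.getD i 0 then xv - yP (i + j)
    else if i + 1 < ζ.length ∧ μ.getD (i + 1) 0 < j ∧ j ≤ ζ.getD (i + 1) 0 then yP (i + j)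
    else xv

/-! ### Complete functions of differences of alphabets, and multi-Schur functions. -/

/-- `S_m(A - B)`: the coefficient of `t^m` in `Π_{b ∈ B} (1 - t b) · Π_{a ∈ A} (1 - t a)⁻¹`
(zero for `m < 0`). -/
noncomputable def Scomp {K : Type*} [Field K] (m : ℤ) (A B : List K) : K :=
  if 0 ≤ m then
    PowerSeries.coeff (R := K) m.toNat
      ((B.map (fun b => 1 - PowerSeries.C (R := K) b * PowerSeries.X)).prod *
        ((A.map (fun a => 1 - PowerSeries.C (R := K) a * PowerSeries.X)).prod)⁻¹)
  else 0

/-- The multi-Schur function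
`S_{w/u'}(z - y₁, …, z - y_N // x₁, …, x_N) = det |S_{w_j - u'_i + j - i}(z + x_i - y_j)|`. -/
noncomputable def multiSchur {K : Type*} [Field K] (N : ℕ) (w u' : ℕ → ℤ) (z : List K)
    (ys xs : ℕ → List K) : K :=
  Matrix.det (Matrix.of fun i j : Fin N =>
    Scomp (w j - u' i + ((j : ℕ) : ℤ) - ((i : ℕ) : ℤ)) (z ++ xs i) (ys j))

/-! ### `S_∞`: permutations of the positive integers with finite support. -/

/-- Permutations of the positive integers (modelled as permutations of `ℕ`
fixing `0`) fixing all but finitely many integers. -/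
def SInfSet : Set (Equiv.Perm ℕ) := {σ | σ 0 = 0 ∧ {i | σ i ≠ i}.Finite}

/-- The least `n` such that `σ` fixes every `i ≥ n`. -/
noncomputable def bnd (σ : Equiv.Perm ℕ) : ℕ := sInf {n | ∀ i, n ≤ i → σ i = i}

/-- The list `[σ 1, …, σ m]` of values of `σ` on the segment it permutes. -/
noncomputable def permList (σ : Equiv.Perm ℕ) : List ℕ :=
  (List.range (bnd σ - 1)).map (fun i => σ (i + 1))

/-- The divided difference `∂_σ` for `σ ∈ S_∞`, computed along a reduced word of `σ`. -/
noncomputable def ddPerm (σ : Equiv.Perm ℕ) (f : Rpoly) : Rpoly :=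
  ddWord (sortWord (bnd σ * bnd σ) (permList σ)) f

/-- The specialization `x_i ↦ y_i` (for every `i`). -/
noncomputable def specXY (f : Rpoly) : Rpoly :=
  MvPolynomial.aeval (Sum.elim (fun i => yP i) (fun i => yP i)) f


/-! Entrywise inequalities between two sorted lists, possibly shifted by one position, are
equivalent to inequalities between their counting functions `m ↦ #{a | a ≤ m}`, and the counting
functions of a column and of its complement in `{1, …, n}` add up to `min m n`. The two staircase
conditions on `(v, u)` say that the counting functions of `v` and `u` differ by `0` or `1` in a
fixed direction; passing to complements reverses that direction, so `(v, u)` is a staircase iff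
the complements interlace as `ũᵢ ≤ ṽᵢ ≤ ũᵢ₊₁`. Subtracting the index, this says that each part of
`μ = p(v, n)` lies between the parts of `ζ = p(u, n) + 1^k` in the two rows it borders, which is
the ribbon condition for `ζ/(0, μ)`. The inverse map adds the index back to `μ` and takes the
complement. -/

theorem List.Pairwise.lt_countP_iff {α : Type*} {R : α → α → Prop} {p : α → Bool}
    {l : List α} (hl : l.Pairwise R) (hp : ∀ a b, R a b → p b → p a) {i : ℕ}
    (hi : i < l.length) : i < l.countP p ↔ p l[i] := by
  induction l generalizing i with
  | nil => simp at hi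
  | cons a t ih =>
    obtain ⟨ha, ht⟩ := List.pairwise_cons.mp hl
    by_cases hpa : p a
    · cases i with
      | zero => simp [hpa]
      | succ i => simp [hpa, ← ih ht (i := i) (by simpa using hi)]
    · have hzero : t.countP p = 0 :=
        List.countP_eq_zero.2 fun b hb hpb => hpa (hp a b (ha b hb) hpb)
      cases i with
      | zero => simp [hpa, hzero]
      | succ i =>
        simp only [List.countP_cons, hzero, hpa, List.getElem_cons_succ]
        exact iff_of_false (by simp) fun hpb => hpa (hp a _ (ha _ (List.getElem_mem _)) hpb)

def countLe (l : List ℕ) (m : ℕ) : ℕ := l.countP (· ≤ m)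

def countGt (l : List ℕ) (m : ℕ) : ℕ := l.countP (m < ·)

theorem countLe_add_countGt (l : List ℕ) (m : ℕ) : countLe l m + countGt l m = l.length := by
  rw [List.length_eq_countP_add_countP (· ≤ m)]
  simp [countLe, countGt]

theorem countLe_le_length (l : List ℕ) (m : ℕ) : countLe l m ≤ l.length :=
  List.countP_le_length

theorem countGt_le_length (l : List ℕ) (m : ℕ) : countGt l m ≤ l.length :=
  List.countP_le_length

theorem lt_countLe_iff {l : List ℕ} (hl : l.Pairwise (· < ·)) {i : ℕ} (hi : i < l.length)
    (m : ℕ) : i < countLe l m ↔ l.getD i 0 ≤ m := by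
  rw [countLe,
    hl.lt_countP_iff (fun a b hab hb => by simp only [decide_eq_true_eq] at hb ⊢; omega) hi,
    List.getD_eq_getElem _ _ hi, decide_eq_true_iff]

theorem lt_countGt_iff {l : List ℕ} (hl : l.Pairwise (· > ·)) {i : ℕ} (hi : i < l.length)
    (m : ℕ) : i < countGt l m ↔ m < l.getD i 0 := by
  rw [countGt,
    hl.lt_countP_iff (fun a b hab hb => by simp only [decide_eq_true_eq] at hb ⊢; omega) hi,
    List.getD_eq_getElem _ _ hi, decide_eq_true_iff]

theorem forall_getD_le_iff_countLe_le {a b : List ℕ} (ha : a.Pairwise (· < ·))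
    (hb : b.Pairwise (· < ·)) {s : ℕ} (hlen : b.length ≤ a.length + s) :
    (∀ p, p + s < b.length → a.getD p 0 ≤ b.getD (p + s) 0) ↔
      ∀ m, countLe b m ≤ countLe a m + s := by
  constructor
  · intro h m
    by_contra! hm
    have hpb : countLe b m - 1 - s + s < b.length := by
      have := countLe_le_length b m; omega
    have hbm := (lt_countLe_iff hb hpb m).1 (by omega)
    have ham := (lt_countLe_iff ha (by omega) m).2 ((h _ hpb).trans hbm)
    omega
  · intro h p hp
    have hbm := (lt_countLe_iff hb hp _).2 le_rfl
    have hcount := h (b.getD (p + s) 0)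
    have := countLe_le_length a (b.getD (p + s) 0)
    exact (lt_countLe_iff ha (by omega) _).1 (by omega)

theorem forall_getD_le_iff_countGt_le {a b : List ℕ} (ha : a.Pairwise (· > ·))
    (hb : b.Pairwise (· > ·)) {s : ℕ} (hlen : a.length ≤ b.length + s) :
    (∀ p, p + s < a.length → a.getD (p + s) 0 ≤ b.getD p 0) ↔
      ∀ m, countGt a m ≤ countGt b m + s := by
  constructor
  · intro h m
    by_contra! hm
    have hpa : countGt a m - 1 - s + s < a.length := by
      have := countGt_le_length a m; omega
    have ham := (lt_countGt_iff ha hpa m).1 (by omega)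
    have hbm := (lt_countGt_iff hb (by omega) m).2 (ham.trans_le (h _ hpa))
    omega
  · intro h p hp
    by_contra! hlt
    have ham := (lt_countGt_iff ha hp _).2 hlt
    have hcount := h (b.getD p 0)
    have := countGt_le_length b (b.getD p 0)
    have hbm := (lt_countGt_iff hb (i := p) (by omega) (b.getD p 0)).1 (by omega)
    omega

theorem mem_oneTo {n a : ℕ} : a ∈ oneTo n ↔ 1 ≤ a ∧ a ≤ n := by
  simp only [oneTo, List.mem_map, List.mem_range]
  constructor
  · rintro ⟨i, hi, rfl⟩; omega
  · rintro ⟨h1, h2⟩; exact ⟨a - 1, by omega, by omega⟩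

theorem pairwise_lt_oneTo (n : ℕ) : (oneTo n).Pairwise (· < ·) :=
  List.pairwise_lt_range.map _ fun _ _ h => by omega

theorem countLe_oneTo (n m : ℕ) : countLe (oneTo n) m = min m n := by
  induction n with
  | zero => simp [countLe, oneTo]
  | succ n ih =>
    simp only [countLe, oneTo, List.range_succ, List.map_append, List.countP_append] at ih ⊢
    simp only [ih, List.map_cons, List.map_nil, List.countP_singleton, decide_eq_true_eq]
    split <;> omega

theorem mem_compl {n a : ℕ} {u : List ℕ} : a ∈ compl n u ↔ (1 ≤ a ∧ a ≤ n) ∧ a ∉ u := by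
  simp [_root_.compl, mem_oneTo]

theorem pairwise_lt_compl (n : ℕ) (u : List ℕ) : (compl n u).Pairwise (· < ·) :=
  (pairwise_lt_oneTo n).filter _

theorem compl_reverse (n : ℕ) (u : List ℕ) : compl n u.reverse = compl n u := by
  simp [_root_.compl]

theorem perm_append_compl {n : ℕ} {u : List ℕ} (hu : u.Nodup) (hsub : u ⊆ oneTo n) :
    (u ++ compl n u).Perm (oneTo n) := by
  have hperm : u.Perm ((oneTo n).filter (· ∈ u)) :=
    (List.perm_ext_iff_of_nodup hu ((pairwise_lt_oneTo n).nodup.filter _)).2 fun a => by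
      simpa using fun ha => hsub ha
  refine (hperm.append_right _).trans ?_
  convert List.filter_append_perm (· ∈ u) (oneTo n) using 3
  simp [_root_.compl]

theorem length_add_length_compl {n : ℕ} {u : List ℕ} (hu : u.Nodup) (hsub : u ⊆ oneTo n) :
    u.length + (compl n u).length = n := by
  simpa [oneTo] using (perm_append_compl hu hsub).length_eq

theorem countLe_add_countLe_compl {n : ℕ} {u : List ℕ} (hu : u.Nodup) (hsub : u ⊆ oneTo n)
    (m : ℕ) : countLe u m + countLe (compl n u) m = min m n := by
  rw [← countLe_oneTo, countLe, countLe, ← List.countP_append]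
  exact (perm_append_compl hu hsub).countP_eq _

theorem compl_compl_of_pairwise_lt {n : ℕ} {w : List ℕ} (hw : w.Pairwise (· < ·))
    (hsub : w ⊆ oneTo n) : compl n (compl n w) = w := by
  refine List.Perm.eq_of_pairwise (fun a b _ _ hab hba => by omega) (pairwise_lt_compl n _) hw ?_
  refine (List.perm_ext_iff_of_nodup (pairwise_lt_compl n _).nodup hw.nodup).2 fun a => ?_
  simp only [mem_compl, not_and, not_not]
  exact ⟨fun h => h.2 h.1, fun h => ⟨mem_oneTo.1 (hsub h), fun _ => h⟩⟩

theorem getD_add_sub_le_getD {l : List ℕ} (hl : l.Pairwise (· < ·)) {i j : ℕ} (hij : i ≤ j)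
    (hj : j < l.length) : l.getD i 0 + (j - i) ≤ l.getD j 0 := by
  induction j, hij using Nat.le_induction with
  | base => simp
  | succ j hij ih =>
    have hstep : l.getD j 0 < l.getD (j + 1) 0 := by
      rw [List.getD_eq_getElem _ _ (by omega), List.getD_eq_getElem _ _ hj]
      exact List.pairwise_iff_getElem.1 hl _ _ _ _ (Nat.lt_succ_self j)
    have := ih (by omega)
    omega

theorem getD_compl_bounds {n i : ℕ} {u : List ℕ} (hi : i < (compl n u).length) :
    i + 1 ≤ (compl n u).getD i 0 ∧ (compl n u).getD i 0 ≤ n := by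
  have hbounds : ∀ j < (compl n u).length, 1 ≤ (compl n u).getD j 0 ∧ (compl n u).getD j 0 ≤ n :=
    fun j hj => (mem_compl.1 (List.getD_eq_getElem _ _ hj ▸ List.getElem_mem hj)).1
  have := getD_add_sub_le_getD (pairwise_lt_compl n u) (Nat.zero_le i) hi
  have := (hbounds 0 (by omega)).1
  exact ⟨by omega, (hbounds i hi).2⟩

theorem pSeq_length (n : ℕ) (u : List ℕ) : (pSeq n u).length = (compl n u).length := by
  simp [pSeq]

theorem getD_pSeq {n i : ℕ} {u : List ℕ} (hi : i < (compl n u).length) :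
    (pSeq n u).getD i 0 = (compl n u).getD i 0 - (i + 1) := by
  rw [List.getD_eq_getElem _ _ (by rwa [pSeq_length]), List.getD_eq_getElem _ _ hi]
  simp [pSeq]

theorem getD_map_pSeq {n i : ℕ} {u : List ℕ} (hi : i < (compl n u).length) :
    ((pSeq n u).map (· + 1)).getD i 0 = (compl n u).getD i 0 - i := by
  rw [List.getD_eq_getElem _ _ (by simpa [pSeq_length]), List.getElem_map,
    ← List.getD_eq_getElem _ 0, getD_pSeq hi]
  have := (getD_compl_bounds hi).1
  omega

theorem pairwise_le_pSeq (n : ℕ) (u : List ℕ) : (pSeq n u).Pairwise (· ≤ ·) := by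
  refine List.pairwise_iff_getElem.2 fun i j hi hj hij => ?_
  rw [pSeq_length] at hi hj
  rw [← List.getD_eq_getElem _ 0, ← List.getD_eq_getElem _ 0, getD_pSeq hi, getD_pSeq hj]
  have := getD_add_sub_le_getD (pairwise_lt_compl n u) hij.le hj
  omega

def addIndex (μ : List ℕ) : List ℕ := μ.mapIdx fun i a => a + (i + 1)

theorem length_addIndex (μ : List ℕ) : (addIndex μ).length = μ.length := by
  simp [addIndex]

theorem addIndex_pSeq (n : ℕ) (u : List ℕ) : addIndex (pSeq n u) = compl n u := by
  refine List.ext_getElem (by simp [addIndex, pSeq]) fun i h₁ h₂ => ?_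
  have := (getD_compl_bounds h₂).1
  rw [List.getD_eq_getElem _ _ h₂] at this
  simp only [addIndex, pSeq, List.getElem_mapIdx]
  omega

theorem pairwise_lt_addIndex {μ : List ℕ} (hμ : μ.Pairwise (· ≤ ·)) :
    (addIndex μ).Pairwise (· < ·) := by
  refine List.pairwise_iff_getElem.2 fun i j hi hj hij => ?_
  simp only [addIndex, List.getElem_mapIdx]
  have := List.pairwise_iff_getElem.1 hμ i j (by simpa [addIndex] using hi)
    (by simpa [addIndex] using hj) hij
  omega

theorem pSeq_compl_addIndex {n : ℕ} {μ : List ℕ} (hμ : μ.Pairwise (· ≤ ·))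
    (hsub : addIndex μ ⊆ oneTo n) : pSeq n (compl n (addIndex μ)) = μ := by
  rw [pSeq, compl_compl_of_pairwise_lt (pairwise_lt_addIndex hμ) hsub]
  refine List.ext_getElem (by simp [addIndex]) fun i h₁ h₂ => ?_
  simp [addIndex]

theorem IsCol.pairwise {u : List ℕ} (hu : IsCol u) : u.Pairwise (· > ·) :=
  List.isChain_iff_pairwise.1 hu.1

theorem IsCol.subset_oneTo {n : ℕ} {u : List ℕ} (hu : IsCol u) (hun : ∀ a ∈ u, a ≤ n) :
    u ⊆ oneTo n :=
  fun a ha => mem_oneTo.2 ⟨hu.2 a ha, hun a ha⟩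

theorem isCol_reverse_compl (n : ℕ) (w : List ℕ) : IsCol (compl n w).reverse :=
  ⟨List.isChain_iff_pairwise.2 (List.pairwise_reverse.2 (pairwise_lt_compl n w)),
    fun _ ha => (mem_compl.1 (List.mem_reverse.1 ha)).1.1⟩

theorem reverse_compl_subset_oneTo (n : ℕ) (w : List ℕ) : (compl n w).reverse ⊆ oneTo n :=
  fun _ ha => mem_oneTo.2 (mem_compl.1 (List.mem_reverse.1 ha)).1

theorem IsCol.nodup {u : List ℕ} (hu : IsCol u) : u.Nodup :=
  hu.pairwise.nodup

theorem isStaircase_pair_iff {u v : List ℕ} :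
    IsStaircase [v, u] ↔
      u.length + 1 = v.length ∧ IsCol v ∧ IsCol u ∧ RowCond v u ∧ DiagCond v u := by
  simp [IsStaircase, Nat.le_one_iff_eq_zero_or_eq_one, or_imp, forall_and, and_assoc]

theorem rowCond_iff_compl {n : ℕ} {u v : List ℕ} (hu : IsCol u) (hv : IsCol v)
    (hun : u ⊆ oneTo n) (hvn : v ⊆ oneTo n) (hlen : u.length + 1 = v.length) :
    RowCond v u ↔ ∀ i < (compl n v).length, (compl n u).getD i 0 ≤ (compl n v).getD i 0 := by
  have hcu := length_add_length_compl hu.nodup hun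
  have hcv := length_add_length_compl hv.nodup hvn
  calc RowCond v u ↔ ∀ m, countGt v m ≤ countGt u m + 1 := by
        rw [← forall_getD_le_iff_countGt_le hv.pairwise hu.pairwise (by omega)]
        simp only [RowCond, ← hlen, Nat.add_lt_add_iff_right]
    _ ↔ ∀ m, countLe (compl n v) m ≤ countLe (compl n u) m + 0 := by
        refine forall_congr' fun m => ?_
        have := countLe_add_countGt u m
        have := countLe_add_countGt v m
        have := countLe_add_countLe_compl hu.nodup hun m
        have := countLe_add_countLe_compl hv.nodup hvn m
        omega
    _ ↔ _ := by
        rw [← forall_getD_le_iff_countLe_le (pairwise_lt_compl n u) (pairwise_lt_compl n v)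
          (by omega)]
        simp only [add_zero]

theorem diagCond_iff_compl {n : ℕ} {u v : List ℕ} (hu : IsCol u) (hv : IsCol v)
    (hun : u ⊆ oneTo n) (hvn : v ⊆ oneTo n) (hlen : u.length + 1 = v.length) :
    DiagCond v u ↔
      ∀ i, i + 1 < (compl n u).length → (compl n v).getD i 0 ≤ (compl n u).getD (i + 1) 0 := by
  have hcu := length_add_length_compl hu.nodup hun
  have hcv := length_add_length_compl hv.nodup hvn
  calc DiagCond v u ↔ ∀ m, countGt u m ≤ countGt v m + 0 := by
        rw [← forall_getD_le_iff_countGt_le hu.pairwise hv.pairwise (by omega)]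
        simp only [DiagCond, add_zero]
    _ ↔ ∀ m, countLe (compl n u) m ≤ countLe (compl n v) m + 1 := by
        refine forall_congr' fun m => ?_
        have := countLe_add_countGt u m
        have := countLe_add_countGt v m
        have := countLe_add_countLe_compl hu.nodup hun m
        have := countLe_add_countLe_compl hv.nodup hvn m
        omega
    _ ↔ _ := forall_getD_le_iff_countLe_le (pairwise_lt_compl n v) (pairwise_lt_compl n u)
        (by omega) |>.symm

theorem getD_le_getD_of_pairwise {l : List ℕ} (hl : l.Pairwise (· ≤ ·)) {i j : ℕ} (hij : i ≤ j)
    (hj : j < l.length) : l.getD i 0 ≤ l.getD j 0 := by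
  rw [List.getD_eq_getElem _ _ (by omega), List.getD_eq_getElem _ _ hj]
  rcases hij.eq_or_lt with rfl | hij
  · rfl
  · exact List.pairwise_iff_getElem.1 hl _ _ _ _ hij

theorem isRibbon_zero_cons_iff {ζ μ : List ℕ} (hζ : ζ.Pairwise (· ≤ ·)) (hμ : μ.Pairwise (· ≤ ·))
    (hlen : μ.length + 1 = ζ.length) :
    IsRibbon ζ (0 :: μ) ↔
      ∀ i < μ.length, ζ.getD i 0 ≤ μ.getD i 0 + 1 ∧ μ.getD i 0 ≤ ζ.getD (i + 1) 0 := by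
  have hμ₀ : (0 :: μ).Pairwise (· ≤ ·) := List.pairwise_cons.2 ⟨fun _ _ => Nat.zero_le _, hμ⟩
  have hskew : IsSkew ζ (0 :: μ) ↔ ∀ i < μ.length, μ.getD i 0 ≤ ζ.getD (i + 1) 0 := by
    simp only [IsSkew, List.length_cons, hlen, true_and]
    constructor
    · intro h i hi
      simpa using h (i + 1) (by omega)
    · rintro h (_ | i) hi
      · simp
      · simpa using h i (by omega)
  have hblock : (¬ ∃ i j, InSkew ζ (0 :: μ) i j ∧ InSkew ζ (0 :: μ) i (j + 1) ∧
      InSkew ζ (0 :: μ) (i + 1) j ∧ InSkew ζ (0 :: μ) (i + 1) (j + 1)) ↔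
      ∀ i < μ.length, ζ.getD i 0 ≤ μ.getD i 0 + 1 := by
    simp only [InSkew, List.getD_cons_succ]
    constructor
    · intro h i hi
      by_contra! hgap
      have h₁ := getD_le_getD_of_pairwise hμ₀ (Nat.le_add_right i 1)
        (by rw [List.length_cons]; omega)
      have h₂ := getD_le_getD_of_pairwise hζ (Nat.le_add_right i 1) (by omega)
      rw [List.getD_cons_succ] at h₁
      exact h ⟨i, μ.getD i 0 + 1, by omega⟩
    · rintro h ⟨i, j, -, ⟨-, -, hj⟩, ⟨hi, hμj, -⟩, -⟩
      have := h i (by omega)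
      omega
  rw [IsRibbon, hskew, hblock, ← forall₂_and]
  exact forall₂_congr fun i _ => and_comm

theorem isStaircase_pair_iff_isRibbon {n : ℕ} {u v : List ℕ} (hu : IsCol u) (hv : IsCol v)
    (hun : u ⊆ oneTo n) (hvn : v ⊆ oneTo n) (hlen : u.length + 1 = v.length) :
    IsStaircase [v, u] ↔ IsRibbon ((pSeq n u).map (· + 1)) (0 :: pSeq n v) := by
  have hcu := length_add_length_compl hu.nodup hun
  have hcv := length_add_length_compl hv.nodup hvn
  rw [isStaircase_pair_iff, rowCond_iff_compl hu hv hun hvn hlen,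
    diagCond_iff_compl hu hv hun hvn hlen,
    isRibbon_zero_cons_iff ((pairwise_le_pSeq n u).map _ fun _ _ h => by omega)
      (pairwise_le_pSeq n v) (by rw [List.length_map, pSeq_length, pSeq_length]; omega),
    pSeq_length]
  have hidx : ∀ i, i + 1 < (compl n u).length ↔ i < (compl n v).length := fun i => by omega
  simp only [hu, hv, hlen, hidx, true_and, ← forall₂_and]
  refine forall₂_congr fun i hi => ?_
  have := getD_compl_bounds hi
  have := getD_compl_bounds (n := n) (u := u) (i := i) (by omega)
  have := getD_compl_bounds (n := n) (u := u) (i := i + 1) (by omega)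
  rw [getD_map_pSeq (by omega), getD_map_pSeq (by omega), getD_pSeq hi]
  omega

theorem pSeq_reverse (n : ℕ) (u : List ℕ) : pSeq n u.reverse = pSeq n u := by
  rw [pSeq, pSeq, compl_reverse]

theorem reverse_compl_addIndex_pSeq {n : ℕ} {v : List ℕ} (hv : IsCol v) (hvn : v ⊆ oneTo n) :
    (compl n (addIndex (pSeq n v))).reverse = v := by
  have hvr : v.reverse ⊆ oneTo n := fun a ha => hvn (List.mem_reverse.1 ha)
  rw [addIndex_pSeq, ← compl_reverse n v,
    compl_compl_of_pairwise_lt (List.pairwise_reverse.2 hv.pairwise) hvr, List.reverse_reverse]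

theorem addIndex_subset_oneTo {n : ℕ} {u μ : List ℕ} (hlen : μ.length + 1 = (compl n u).length)
    (hskew : IsSkew ((pSeq n u).map (· + 1)) (0 :: μ)) : addIndex μ ⊆ oneTo n := by
  intro a ha
  obtain ⟨i, hi, rfl⟩ := List.getElem_of_mem ha
  have hiμ : i < μ.length := by simpa [addIndex] using hi
  have hμi := hskew.2 (i + 1) (by rw [List.length_map, pSeq_length]; omega)
  have := getD_compl_bounds (n := n) (u := u) (i := i + 1) (by omega)
  rw [List.getD_cons_succ, getD_map_pSeq (by omega), List.getD_eq_getElem _ _ hiμ] at hμi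
  simp only [addIndex, List.getElem_mapIdx, mem_oneTo]
  omega

theorem staircase_ribbon_bijection_general (n k : ℕ) (u : List ℕ) (hu : IsCol u)
    (hun : ∀ a ∈ u, a ≤ n) (hlen : u.length + k = n) :
    Set.BijOn (pSeq n)
      {v : List ℕ | IsCol v ∧ v.length + k = n + 1 ∧ (∀ a ∈ v, a ≤ n) ∧ IsStaircase [v, u]}
      {μ : List ℕ | μ.length + 1 = k ∧ μ.Pairwise (· ≤ ·) ∧
        IsRibbon ((pSeq n u).map (· + 1)) (0 :: μ)} := by
  have hsub := hu.subset_oneTo hun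
  have hcu : (compl n u).length = k := by
    have := length_add_length_compl hu.nodup hsub
    omega
  refine Set.InvOn.bijOn (f' := fun μ => (compl n (addIndex μ)).reverse) ⟨?_, ?_⟩ ?_ ?_
  · rintro v ⟨hv, -, hvn, -⟩
    exact reverse_compl_addIndex_pSeq hv (hv.subset_oneTo hvn)
  · rintro μ ⟨hμlen, hμ, hrib⟩
    rw [pSeq_reverse]
    exact pSeq_compl_addIndex hμ (addIndex_subset_oneTo (by omega) hrib.1)
  · rintro v ⟨hv, hvlen, hvn, hst⟩
    have hcv := length_add_length_compl hv.nodup (hv.subset_oneTo hvn)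
    refine ⟨by rw [pSeq_length]; omega, pairwise_le_pSeq n v, ?_⟩
    exact (isStaircase_pair_iff_isRibbon hu hv hsub (hv.subset_oneTo hvn) (by omega)).1 hst
  · rintro μ ⟨hμlen, hμ, hrib⟩
    have hw := addIndex_subset_oneTo (by omega) hrib.1
    have hvlen := length_add_length_compl (pairwise_lt_addIndex hμ).nodup hw
    rw [length_addIndex] at hvlen
    have hpv : pSeq n (compl n (addIndex μ)).reverse = μ := by
      rw [pSeq_reverse, pSeq_compl_addIndex hμ hw]
    refine ⟨isCol_reverse_compl n _, by rw [List.length_reverse]; omega,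
      fun a ha => (mem_oneTo.1 (reverse_compl_subset_oneTo n _ ha)).2, ?_⟩
    rw [isStaircase_pair_iff_isRibbon hu (isCol_reverse_compl n _) hsub
      (reverse_compl_subset_oneTo n _) (by rw [List.length_reverse]; omega), hpv]
    exact hrib

/-- `v ↦ p(v,n)` is a bijection between the columns `v` of length
`n-k+1` with `v₁ ≤ n` such that `(v, u)` is a staircase, and the weakly
increasing `μ ∈ ℕ^{k-1}` such that `(p(u,n) + 1^k)/μ` is a ribbon (`μ` padded
with an initial `0` part). -/
theorem staircase_ribbon_bijection (n k : ℕ) (hn : 0 < n) (u : List ℕ) (hu : IsCol u)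
    (hun : ∀ a ∈ u, a ≤ n) (hlen : u.length + k = n) :
    Set.BijOn (pSeq n)
      {v : List ℕ | IsCol v ∧ v.length + k = n + 1 ∧ (∀ a ∈ v, a ≤ n) ∧ IsStaircase [v, u]}
      {μ : List ℕ | μ.length + 1 = k ∧ μ.Pairwise (· ≤ ·) ∧
        IsRibbon ((pSeq n u).map (· + 1)) (0 :: μ)} :=
  staircase_ribbon_bijection_general n k u hu hun hlen
end

section
/- Let u be a column of length r with smallest entry u_r = k > 1. Then F(u,[ ]) is obtained from F([u_1−k+1, u_2−k+1, …, u_r−k+1], [ ]) by increasing the index of each variable y_i to y_{i+k−1} (i.e. substituting y_i ↦ y_{i+k−1} for all i). -/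
open scoped BigOperators

namespace List

variable {α β : Type*}

lemma getD_mem {l : List α} {p : ℕ} (d : α) (hp : p < l.length) : l.getD p d ∈ l := by
  rw [getD_eq_getElem _ _ hp]
  exact getElem_mem hp

lemma getD_map_of_lt {l : List α} (f : α → β) {p : ℕ} (d : α) (d' : β) (hp : p < l.length) :
    (l.map f).getD p d' = f (l.getD p d) := by
  rw [getD_eq_getElem _ _ (by simpa using hp), getD_eq_getElem _ _ hp, getElem_map]

lemma getD_map_map (t : List (List α)) (f : α → β) (i : ℕ) :
    (t.map (map f)).getD i [] = (t.getD i []).map f :=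
  getD_map t [] (map f)

lemma headD_map_map (t : List (List α)) (f : α → β) :
    (t.map (map f)).headD [] = (t.headD []).map f :=
  headD_map (a := [])

lemma getLastD_map_map (t : List (List α)) (f : α → β) :
    (t.map (map f)).getLastD [] = (t.getLastD []).map f :=
  getLastD_map (a := [])

lemma map_sub_add_cancel {l : List ℕ} {s : ℕ} (h : ∀ a ∈ l, s ≤ a) :
    (l.map (· - s)).map (· + s) = l := by
  rw [map_map]
  exact (map_congr_left fun a ha => Nat.sub_add_cancel (h a ha)).trans (map_id l)

lemma getLastD_le_of_isChain_gt {u : List ℕ} (hu : u.IsChain (· > ·)) {a : ℕ} (ha : a ∈ u) :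
    u.getLastD 0 ≤ a := by
  have hne : u ≠ [] := ne_nil_of_mem ha
  rw [getLastD_eq_getLast?, getLast?_eq_some_getLast hne, Option.getD_some]
  have hp := isChain_iff_pairwise.mp hu
  rw [← dropLast_append_getLast hne] at hp ha
  rw [pairwise_append] at hp
  rcases mem_append.mp ha with ha | ha
  · exact (hp.2.2 a ha _ (mem_singleton_self _)).le
  · exact (eq_of_mem_singleton ha).ge

end List

lemma exists_le_of_rowCond {prev next : List ℕ} (h : RowCond prev next)
    (hlen : next.length + 1 = prev.length) {a : ℕ} (ha : a ∈ next) : ∃ b ∈ prev, b ≤ a := by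
  obtain ⟨p, hp, rfl⟩ := List.mem_iff_getElem.mp ha
  refine ⟨prev[p + 1], List.getElem_mem _, ?_⟩
  have := h p hp
  rwa [List.getD_eq_getElem _ _ hp, List.getD_eq_getElem _ _ (by omega)] at this

lemma IsCol.map {c : List ℕ} (hc : IsCol c) {f : ℕ → ℕ} {S : Set ℕ} (hS : ∀ a ∈ c, a ∈ S)
    (hf : StrictMonoOn f S) (hpos : ∀ a ∈ S, 0 < f a) : IsCol (c.map f) := by
  refine ⟨List.Pairwise.isChain (List.pairwise_map.2 ?_), ?_⟩
  · exact (List.isChain_iff_pairwise.1 hc.1).imp_of_mem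
      fun ha hb hab => hf (hS _ hb) (hS _ ha) hab
  · simp only [List.mem_map, forall_exists_index, and_imp, forall_apply_eq_imp_iff₂]
    exact fun a ha => hpos a (hS a ha)

namespace IsStaircase

variable {t : List (List ℕ)}

lemma length_getD_succ (ht : IsStaircase t) {i : ℕ} (hi : i + 1 < t.length) :
    (t.getD (i + 1) []).length + 1 = (t.getD i []).length := by
  have h₁ := ht.2.1 i (by omega)
  have h₂ := ht.2.1 (i + 1) hi
  omega

/-- Column minima weakly increase from left to right. -/
lemma le_of_mem (ht : IsStaircase t) {m : ℕ} (hhead : ∀ a ∈ t.headD [], m ≤ a) :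
    ∀ c ∈ t, ∀ a ∈ c, m ≤ a := by
  suffices h : ∀ i, i < t.length → ∀ a ∈ t.getD i [], m ≤ a by
    intro c hc
    obtain ⟨i, hi, rfl⟩ := List.mem_iff_getElem.mp hc
    simpa only [List.getD_eq_getElem _ _ hi] using h i hi
  intro i
  induction i with
  | zero =>
    intro _
    cases t with
    | nil => simp
    | cons c t => simpa using hhead
  | succ i ih =>
    intro hi a ha
    obtain ⟨b, hb, hba⟩ :=
      exists_le_of_rowCond (ht.2.2.2 i hi).1 (ht.length_getD_succ hi) ha
    exact (ih (by omega) b hb).trans hba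

lemma map_map (ht : IsStaircase t) {f : ℕ → ℕ} {S : Set ℕ}
    (hS : ∀ c ∈ t, ∀ a ∈ c, a ∈ S) (hf : StrictMonoOn f S) (hpos : ∀ a ∈ S, 0 < f a) :
    IsStaircase (t.map (List.map f)) := by
  refine ⟨by simpa using ht.1, fun i hi => ?_, ?_, fun i hi => ?_⟩
  · simp only [List.getD_map_map, List.length_map]
    exact ht.2.1 i (by simpa using hi)
  · simp only [List.mem_map, forall_exists_index, and_imp, forall_apply_eq_imp_iff₂]
    exact fun c hc => IsCol.map (ht.2.2.1 c hc) (hS c hc) hf hpos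
  · rw [List.length_map] at hi
    have hlen := ht.length_getD_succ hi
    have hmem : ∀ j, j < t.length → ∀ p, p < (t.getD j []).length → (t.getD j []).getD p 0 ∈ S :=
      fun j hj p hp => hS _ (List.getD_mem _ hj) _ (List.getD_mem _ hp)
    obtain ⟨hrow, hdiag⟩ := ht.2.2.2 i hi
    simp only [RowCond, DiagCond, List.getD_map_map, List.length_map]
    refine ⟨fun p hp => ?_, fun p hp => ?_⟩
    · rw [List.getD_map_of_lt f 0 0 hp, List.getD_map_of_lt f 0 0 (by omega : p + 1 < _)]
      exact (hf.le_iff_le (hmem i (by omega) _ (by omega)) (hmem _ hi _ hp)).2 (hrow p hp)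
    · rw [List.getD_map_of_lt f 0 0 hp, List.getD_map_of_lt f 0 0 (by omega : p < _)]
      exact (hf.le_iff_le (hmem _ hi _ hp) (hmem i (by omega) _ (by omega))).2 (hdiag p hp)

end IsStaircase

section Weights

variable {K : Type*} [Field K]

lemma colW_map_add (xv : K) (y : ℕ → K) (s : ℕ) {prev next : List ℕ}
    (h : next.length < prev.length) :
    colW xv y (prev.map (· + s)) (next.map (· + s)) = colW xv (fun i => y (i + s)) prev next := by
  unfold colW
  rw [List.length_map]
  refine Finset.prod_congr rfl fun p hp => ?_
  have hp := Finset.mem_range.1 hp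
  rw [List.getD_map_of_lt _ 0 0 hp, List.getD_map_of_lt _ 0 0 (by omega : p + 1 < _),
    List.getD_map_of_lt _ 0 0 (by omega : p < _)]
  simp only [entryW, Nat.add_right_cancel_iff, Nat.add_lt_add_iff_right]

lemma stairW_map_add (x y : ℕ → K) (s : ℕ) {t : List (List ℕ)} (ht : IsStaircase t) :
    stairW x y (t.map (List.map (· + s))) = stairW x (fun i => y (i + s)) t := by
  unfold stairW
  rw [List.length_map]
  refine Finset.prod_congr rfl fun m hm => ?_
  have hm : m + 1 < t.length := by
    have := Finset.mem_range.1 hm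
    have := List.length_pos_iff.2 ht.1
    omega
  rw [List.getD_map_map, List.getD_map_map]
  exact colW_map_add _ _ _ (by have := ht.length_getD_succ hm; omega)

/-- Adding `s` to every entry is a weight-preserving bijection between the staircases from `u`
to `v` and those from `u + s` to `v + s`, once `y` is shifted by `s`: every entry of the latter
exceeds `s`, so subtracting `s` inverts it. -/
theorem Fpart_map_add {u : List ℕ} (hu : ∀ a ∈ u, 0 < a) (v : List ℕ) (s : ℕ) (x y : ℕ → K) :
    Fpart (u.map (· + s)) (v.map (· + s)) x y = Fpart u v x (fun i => y (i + s)) := by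
  unfold Fpart
  symm
  refine finsum_mem_eq_of_bijOn (fun t => t.map (List.map (· + s))) ⟨?_, ?_, ?_⟩
    fun t ht => (stairW_map_add x y s ht.1).symm
  · rintro t ⟨ht, rfl, rfl⟩
    exact ⟨ht.map_map (S := Set.Ioi 0) (fun c hc a ha => (ht.2.2.1 c hc).2 a ha)
      (fun a _ b _ h => Nat.add_lt_add_right h s) (fun a ha => Nat.lt_add_right s ha),
      List.headD_map_map t _, List.getLastD_map_map t _⟩
  · exact fun t₁ _ t₂ _ h =>
      List.map_injective_iff.2 (List.map_injective_iff.2 (add_left_injective s)) h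
  · rintro t ⟨ht, hhead, hlast⟩
    have hgt : ∀ c ∈ t, ∀ a ∈ c, s < a := by
      refine ht.le_of_mem fun a ha => ?_
      rw [hhead, List.mem_map] at ha
      obtain ⟨b, hb, rfl⟩ := ha
      have := hu b hb
      omega
    refine ⟨t.map (List.map (· - s)), ⟨ht.map_map (S := Set.Ioi s) hgt
      (fun a ha _ _ h => Nat.sub_lt_sub_right ha.le h) (fun a ha => Nat.sub_pos_of_lt ha), ?_, ?_⟩,
      ?_⟩
    · rw [List.headD_map_map, hhead, List.map_map]
      simp [Function.comp_def]
    · rw [List.getLastD_map_map, hlast, List.map_map]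
      simp [Function.comp_def]
    · beta_reduce
      rw [List.map_map]
      exact (List.map_congr_left fun c hc =>
        List.map_sub_add_cancel fun a ha => (hgt c hc a ha).le).trans (List.map_id t)

end Weights

theorem F_left_truncated_shift_general {K : Type*} [Field K] (k : ℕ) (u : List ℕ) (hu : IsCol u)
    (hk : u.getLastD 0 = k) (hk1 : 1 < k)
    (x y : ℕ → K) :
    Fpart u [] x y
      = Fpart (u.map (fun a => a - (k - 1))) [] x (fun i => y (i + (k - 1))) := by
  have hge : ∀ a ∈ u, k ≤ a := fun a ha => hk ▸ List.getLastD_le_of_isChain_gt hu.1 ha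
  have hpos : ∀ a ∈ u.map (· - (k - 1)), 0 < a := by
    simp only [List.mem_map, forall_exists_index, and_imp, forall_apply_eq_imp_iff₂]
    exact fun a ha => by have := hge a ha; omega
  have hu_eq : (u.map (· - (k - 1))).map (· + (k - 1)) = u :=
    List.map_sub_add_cancel fun a ha => (hge a ha).trans' (Nat.sub_le k 1)
  conv_lhs => rw [← hu_eq, ← List.map_nil (f := (· + (k - 1)))]
  exact Fpart_map_add hpos [] (k - 1) x y

/-- for a column `u` of length `r` with smallest entry `u_r = k > 1`,
`F(u, [ ])` is obtained from `F([u₁ - k + 1, …, u_r - k + 1], [ ])` by the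
substitution `y_i ↦ y_{i + k - 1}`. -/
theorem F_left_truncated_shift {K : Type*} [Field K] (r k : ℕ) (u : List ℕ) (hu : IsCol u)
    (hlen : u.length = r) (hk : u.getLastD 0 = k) (hk1 : 1 < k)
    (x y : ℕ → K) (hy : ∀ i, y i ≠ 0) :
    Fpart u [] x y
      = Fpart (u.map (fun a => a - (k - 1))) [] x (fun i => y (i + (k - 1))) :=
  F_left_truncated_shift_general k u hu hk hk1 x y
end
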